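/- For every ε > 0, the set Ω_ε = { p ∈ ℝ^d : p_1 = 1, p_i > 0 for all i, and min_{w ∈ W_d} G(p,w) ≥ ε } is a compact subset of ℝ^d. -/

import Mathlib

def wvec (d : ℕ) (j : Fin d) : Fin d → ℕ :=
  fun i => if i < j then 0 else if i = j then (j : ℕ) + 1 else (i : ℕ)

noncomputable def G (d : ℕ) (p : Fin d → ℝ) (w : Fin d → ℕ) : ℝ :=
  (∏ i, p i) / (Real.sqrt (∑ i, ((w i : ℝ)) ^ 2 * p i ^ 2)) ^ d

noncomputable def minG (d : ℕ) (p : Fin d → ℝ) : ℝ :=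
  ⨅ j : Fin d, G d p (wvec d j)

noncomputable def D (d : ℕ) (j : Fin d) (p : Fin d → ℝ) : ℝ :=
  Real.sqrt (∑ i, ((wvec d j i : ℝ)) ^ 2 * p i ^ 2)

/-- `p*`: `p*_1 = 1`, `p*_2 = 1/√3`, `p*_j = √(2/3)/(j−1)` for `3 ≤ j ≤ d`
(0-based: index `i` has 1-based position `i+1`, so the denominator `j−1` is `i`). -/
noncomputable def pstar (d : ℕ) : Fin d → ℝ :=
  fun i => if (i : ℕ) = 0 then 1 else if (i : ℕ) = 1 then 1 / Real.sqrt 3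
    else Real.sqrt (2 / 3) / ((i : ℕ) : ℝ)

/-!
Every weight of `wvec d 0` is at least `1`, so with `N = √(∑ wᵢ² pᵢ²)` each `pᵢ ≤ N`.
Hence `ε N^d ≤ G(p, w) N^d = ∏ pᵢ ≤ p_k N^(d-1)`, i.e. `ε N ≤ p_k` for every `k`. Since `p₀ = 1`
this gives `N ≥ 1` and `N ≤ 1/ε`, so `Ω_ε` lies in the box `[ε, 1/ε]^d`, on which every
`G(·, w)` is continuous; `Ω_ε` is therefore a closed subset of a compact box.
-/

open Finset Set

lemma one_le_wvec_zero {d : ℕ} (hd : 0 < d) (i : Fin d) : 1 ≤ wvec d ⟨0, hd⟩ i := by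
  unfold wvec
  split_ifs <;> simp_all [Fin.lt_def, Fin.ext_iff]
  omega

lemma wvec_self_ne_zero {d : ℕ} (j : Fin d) : wvec d j j ≠ 0 := by
  simp [wvec]

lemma le_sqrt_sum_weighted_sq {ι : Type*} [Fintype ι] (w : ι → ℕ) (p : ι → ℝ) {i : ι}
    (hw : 1 ≤ w i) : p i ≤ √(∑ j, (w j : ℝ) ^ 2 * p j ^ 2) :=
  calc p i ≤ |p i| := le_abs_self _
    _ = √(p i ^ 2) := (Real.sqrt_sq_eq_abs _).symm
    _ ≤ √((w i : ℝ) ^ 2 * p i ^ 2) :=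
      Real.sqrt_le_sqrt (le_mul_of_one_le_left (sq_nonneg _) (one_le_pow₀ (by exact_mod_cast hw)))
    _ ≤ √(∑ j, (w j : ℝ) ^ 2 * p j ^ 2) :=
      Real.sqrt_le_sqrt <| single_le_sum (f := fun j => (w j : ℝ) ^ 2 * p j ^ 2)
        (fun j _ => by positivity) (mem_univ i)

lemma prod_le_mul_pow_card_sub_one {ι : Type*} [Fintype ι] [DecidableEq ι] {p : ι → ℝ} {N : ℝ}
    (hp : ∀ i, 0 ≤ p i) (hN : ∀ i, p i ≤ N) (k : ι) :
    ∏ i, p i ≤ p k * N ^ (Fintype.card ι - 1) := by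
  rw [← mul_prod_erase univ p (mem_univ k)]
  refine mul_le_mul_of_nonneg_left ?_ (hp k)
  calc ∏ i ∈ univ.erase k, p i ≤ ∏ _i ∈ univ.erase k, N :=
        prod_le_prod (fun i _ => hp i) (fun i _ => hN i)
    _ = N ^ (Fintype.card ι - 1) := by simp [card_erase_of_mem]

lemma mul_sqrt_le_of_le_G {d : ℕ} {ε : ℝ} {p : Fin d → ℝ} {w : Fin d → ℕ}
    (hw : ∀ i, 1 ≤ w i) (hp : ∀ i, 0 < p i) (hG : ε ≤ G d p w) (k : Fin d) :
    ε * √(∑ i, (w i : ℝ) ^ 2 * p i ^ 2) ≤ p k := by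
  set N := √(∑ i, (w i : ℝ) ^ 2 * p i ^ 2)
  have hpN : ∀ i, p i ≤ N := fun i => le_sqrt_sum_weighted_sq w p (hw i)
  have hN : 0 < N := (hp k).trans_le (hpN k)
  have hprod : ε * N ^ d ≤ p k * N ^ (d - 1) :=
    calc ε * N ^ d ≤ ∏ i, p i := (le_div_iff₀ (pow_pos hN d)).1 hG
      _ ≤ p k * N ^ (d - 1) := by
        simpa using prod_le_mul_pow_card_sub_one (fun i => (hp i).le) hpN k
  obtain ⟨m, rfl⟩ : ∃ m, d = m + 1 := Nat.exists_eq_add_one.2 k.pos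
  rw [pow_succ, Nat.add_sub_cancel] at hprod
  exact le_of_mul_le_mul_right (by linarith) (pow_pos hN m)

lemma mem_Icc_of_le_G_wvec_zero {d : ℕ} (hd : 0 < d) {ε : ℝ} (hε : 0 < ε) {p : Fin d → ℝ}
    (h0 : p ⟨0, hd⟩ = 1) (hp : ∀ i, 0 < p i) (hG : ε ≤ G d p (wvec d ⟨0, hd⟩)) (i : Fin d) :
    p i ∈ Icc ε (1 / ε) := by
  have hw := one_le_wvec_zero hd
  set N := √(∑ i, (wvec d ⟨0, hd⟩ i : ℝ) ^ 2 * p i ^ 2)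
  have hN : 1 ≤ N := h0 ▸ le_sqrt_sum_weighted_sq _ p (hw _)
  have hεN : ε * N ≤ 1 := h0 ▸ mul_sqrt_le_of_le_G hw hp hG _
  constructor
  · calc ε ≤ ε * N := le_mul_of_one_le_right hε.le hN
      _ ≤ p i := mul_sqrt_le_of_le_G hw hp hG i
  · calc p i ≤ N := le_sqrt_sum_weighted_sq _ p (hw i)
      _ ≤ 1 / ε := (le_div_iff₀' hε).2 hεN

lemma continuousOn_G {d : ℕ} {w : Fin d → ℕ} {j : Fin d} (hj : w j ≠ 0) :
    ContinuousOn (fun p => G d p w) {p | ∀ i, 0 < p i} := by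
  unfold G
  refine ContinuousOn.div (by fun_prop) (by fun_prop) fun p hp => ?_
  have hpj : 0 < p j := hp j
  have : 0 < ∑ i, (w i : ℝ) ^ 2 * p i ^ 2 :=
    sum_pos' (fun i _ => by positivity) ⟨j, mem_univ j, by positivity⟩
  positivity

lemma le_minG_iff {d : ℕ} [NeZero d] {ε : ℝ} {p : Fin d → ℝ} :
    ε ≤ minG d p ↔ ∀ j, ε ≤ G d p (wvec d j) :=
  le_ciInf_iff (Set.finite_range _).bddBelow

/-- For every `ε > 0`, the set
`Ω_ε = {p : p_1 = 1, p_i > 0 ∀i, min_{w ∈ W_d} G(p,w) ≥ ε}` is compact. -/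
theorem stmt4 (d : ℕ) (hd : 2 ≤ d) (ε : ℝ) (hε : 0 < ε) :
    IsCompact {p : Fin d → ℝ | p ⟨0, by omega⟩ = 1 ∧ (∀ i, 0 < p i) ∧ ε ≤ minG d p} := by
  have hd0 : 0 < d := by omega
  have : NeZero d := ⟨hd0.ne'⟩
  set K : Set (Fin d → ℝ) := univ.pi fun _ => Icc ε (1 / ε)
  have hKpos : K ⊆ {p | ∀ i, 0 < p i} := fun p hp i => hε.trans_le (hp i trivial).1
  have hS : {p : Fin d → ℝ | p ⟨0, hd0⟩ = 1 ∧ (∀ i, 0 < p i) ∧ ε ≤ minG d p} =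
      {p | p ⟨0, hd0⟩ = 1} ∩ ⋂ j, K ∩ (fun p => G d p (wvec d j)) ⁻¹' Ici ε := by
    ext p
    simp only [Set.mem_ofPred_eq, Set.mem_inter_iff, Set.mem_iInter, Set.mem_preimage, Set.mem_Ici,
      le_minG_iff]
    constructor
    · rintro ⟨h0, hp, hG⟩
      exact ⟨h0, fun j => ⟨fun i _ => mem_Icc_of_le_G_wvec_zero hd0 hε h0 hp (hG _) i, hG j⟩⟩
    · rintro ⟨h0, h⟩
      exact ⟨h0, hKpos (h ⟨0, hd0⟩).1, fun j => (h j).2⟩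
  rw [hS]
  refine (isCompact_univ_pi fun _ => isCompact_Icc).of_isClosed_subset ?_
    fun p hp => (Set.mem_iInter.1 hp.2 ⟨0, hd0⟩).1
  refine (isClosed_eq (continuous_apply _) continuous_const).inter (isClosed_iInter fun j => ?_)
  exact ((continuousOn_G (wvec_self_ne_zero j)).mono hKpos).preimage_isClosed_of_isClosed
    (isClosed_set_pi fun _ _ => isClosed_Icc) isClosed_Ici
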